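/- Let G be a group, H a normal subgroup of finite index in G, L a field, and V an L-linear representation of G. The map α : Hom_{L[H]}(L[G], V) → V ⊗_L L[G/H] defined by α(f) = Σ_{z̄ ∈ G/H} z⁻¹·f(z) ⊗ [z̄⁻¹], where z is any representative of the coset z̄, is well defined (each summand z⁻¹·f(z) ⊗ [z̄⁻¹] is independent of the choice of representative z of z̄), and α is an L-linear G-equivariant isomorphism from Hom_{L[H]}(L[G], V), equipped with the G-action (g·F)(x) = F(x·g), onto V ⊗_L L[G/H], equipped with the G-action g·(v ⊗ [x]) = (g·v) ⊗ [g·x]. -/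

import Mathlib

open scoped TensorProduct

variable {L G V : Type*} [Field L] [Group G] [AddCommGroup V] [Module L V]

/-- The coinduced module `Hom_{L[H]}(L[G], V)`: `L`-linear maps `F : L[G] → V` with
`F(h·x) = h·F(x)` for all `h ∈ H`, as a submodule of the `L`-linear maps `L[G] → V`. -/
def coind (H : Subgroup G) (ρ : Representation L (↥H) V) :
    Submodule L (MonoidAlgebra L G →ₗ[L] V) where
  carrier := {F | ∀ (h : H) (x : MonoidAlgebra L G),
    F (MonoidAlgebra.single (h : G) 1 * x) = ρ h (F x)}
  add_mem' := by
    intro a b ha hb h x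
    simp [ha h x, hb h x]
  zero_mem' := by intro h x; simp
  smul_mem' := by
    intro c F hF h x
    simp [hF h x]

/-- The action of `G` on the coinduced module, `(g·F)(x) = F(x·g)`. -/
noncomputable def coindAct (H : Subgroup G) (ρ : Representation L (↥H) V) (g : G) :
    coind H ρ →ₗ[L] coind H ρ where
  toFun F := ⟨F.1 ∘ₗ LinearMap.mulRight L (MonoidAlgebra.single g 1), by
    intro h x
    simp only [LinearMap.coe_comp, Function.comp_apply, LinearMap.mulRight_apply]
    rw [mul_assoc]
    exact F.2 h _⟩
  map_add' F₁ F₂ := Subtype.ext (LinearMap.add_comp _ _ _)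
  map_smul' c F := Subtype.ext (LinearMap.smul_comp _ _ _)

/-- The coinduced module `Hom_{L[H]}(L[G], V)` as a representation of `G`,
with the action `(g·F)(x) = F(x·g)`. -/
noncomputable def coindRep (H : Subgroup G) (ρ : Representation L (↥H) V) :
    Representation L G (coind H ρ) where
  toFun := coindAct H ρ
  map_one' := by
    refine LinearMap.ext fun F => Subtype.ext (LinearMap.ext fun x => ?_)
    simp only [coindAct, LinearMap.coe_mk, AddHom.coe_mk, LinearMap.coe_comp,
      Function.comp_apply, LinearMap.mulRight_apply, Module.End.one_apply]
    rw [← MonoidAlgebra.one_def, mul_one]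
  map_mul' g₁ g₂ := by
    refine LinearMap.ext fun F => Subtype.ext (LinearMap.ext fun x => ?_)
    simp [coindAct, MonoidAlgebra.single_mul_single, mul_assoc]

/-- The `L`-submodule of 1-cocycles of `Γ` valued in a representation `M`. -/
def Z1 {Γ M : Type*} [Group Γ] [AddCommGroup M] [Module L M]
    (ρ : Representation L Γ M) : Submodule L (Γ → M) where
  carrier := {c | ∀ γ₁ γ₂ : Γ, c (γ₁ * γ₂) = c γ₁ + ρ γ₁ (c γ₂)}
  add_mem' := by
    intro a b ha hb γ₁ γ₂
    simp only [Pi.add_apply, ha γ₁ γ₂, hb γ₁ γ₂, map_add]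
    abel
  zero_mem' := by intro γ₁ γ₂; simp
  smul_mem' := by
    intro t a ha γ₁ γ₂
    simp only [Pi.smul_apply, ha γ₁ γ₂, map_smul, smul_add]

/-- The `L`-submodule of 1-coboundaries of `Γ` valued in a representation `M`. -/
def B1 {Γ M : Type*} [Group Γ] [AddCommGroup M] [Module L M]
    (ρ : Representation L Γ M) : Submodule L (Γ → M) where
  carrier := {c | ∃ m : M, ∀ γ : Γ, c γ = ρ γ m - m}
  add_mem' := by
    rintro a b ⟨m, hm⟩ ⟨m', hm'⟩
    exact ⟨m + m', fun γ => by simp only [Pi.add_apply, hm γ, hm' γ, map_add]; abel⟩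
  zero_mem' := ⟨0, by simp⟩
  smul_mem' := by
    rintro t a ⟨m, hm⟩
    exact ⟨t • m, fun γ => by simp [hm γ, smul_sub]⟩

/-- First group cohomology `H¹(Γ, M)`: 1-cocycles modulo 1-coboundaries. -/
def H1 {Γ M : Type*} [Group Γ] [AddCommGroup M] [Module L M]
    (ρ : Representation L Γ M) :=
  ↥(Z1 ρ) ⧸ (B1 ρ).comap (Z1 ρ).subtype

/-!
Evaluating on the basis `single g 1` identifies `Hom_{L[H]}(L[G], V)` with the maps `f : G → V`
satisfying `f (h * g) = h • f g` for `h ∈ H`. For such `f` the function `z ↦ z⁻¹ • f z` is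
constant on cosets of the normal subgroup `H`, and `f ↦ (z̄ ↦ z⁻¹ • f z)` is a linear isomorphism
onto `G ⧸ H → V`, with inverse `t ↦ (g ↦ g • t ḡ)`. As `G ⧸ H` is finite, the basis `[z̄⁻¹]`
of `L[G ⧸ H]` identifies `G ⧸ H → V` with `V ⊗ L[G ⧸ H]`, and `α` is the composite. Under the
first isomorphism `g` acts by `t ↦ (z̄ ↦ g • t (z̄ * ḡ))`, so equivariance is the reindexing
`z̄ ↦ z̄ * ḡ` of the sum defining `α`.
-/

open MonoidAlgebra

section EquivFun
variable {R M N κ : Type*} [CommSemiring R] [AddCommMonoid M] [Module R M] [AddCommMonoid N]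
  [Module R N] [Fintype κ] [DecidableEq κ]

noncomputable def TensorProduct.equivFunOfBasisRight (𝒞 : Module.Basis κ R N) :
    M ⊗[R] N ≃ₗ[R] (κ → M) :=
  TensorProduct.equivFinsuppOfBasisRight 𝒞 ≪≫ₗ Finsupp.linearEquivFunOnFinite R M κ

theorem TensorProduct.equivFunOfBasisRight_symm_apply (𝒞 : Module.Basis κ R N) (t : κ → M) :
    (TensorProduct.equivFunOfBasisRight 𝒞).symm t = ∑ i, t i ⊗ₜ 𝒞 i := by
  simp [TensorProduct.equivFunOfBasisRight, Finsupp.sum_fintype]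

end EquivFun

theorem MonoidAlgebra.basis_constr_single {R X W : Type*} [CommSemiring R] [AddCommMonoid W]
    [Module R W] (f : X → W) (x : X) :
    (MonoidAlgebra.basis X R).constr R f (single x 1) = f x :=
  Module.Basis.constr_basis _ _ _ x

section Coind
variable (H : Subgroup G)

theorem mem_coind_iff {σ : Representation L H V} {F : MonoidAlgebra L G →ₗ[L] V} :
    F ∈ coind H σ ↔ ∀ (h : H) (g : G), F (single (h * g) 1) = σ h (F (single g 1)) := by
  refine forall_congr' fun h => ⟨fun hF g => ?_, fun hF x => ?_⟩
  · simpa [single_mul_single] using hF (single g 1)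
  · refine LinearMap.congr_fun ((MonoidAlgebra.basis G L).ext
      (f₁ := F ∘ₗ LinearMap.mulLeft L (single (h : G) 1)) (f₂ := σ h ∘ₗ F) fun g => ?_) x
    simpa [single_mul_single] using hF g

variable {H} [H.Normal] {ρ : Representation L G V}

theorem coind_inv_apply_single_eq {F : MonoidAlgebra L G →ₗ[L] V}
    (hF : F ∈ coind H (ρ.comp H.subtype)) {z z' : G} (hzz' : (z : G ⧸ H) = z') :
    ρ z⁻¹ (F (single z 1)) = ρ z'⁻¹ (F (single z' 1)) := by
  have hk : z' * z⁻¹ ∈ H := ‹H.Normal›.mem_comm (QuotientGroup.eq.mp hzz')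
  calc ρ z⁻¹ (F (single z 1)) = ρ z'⁻¹ (ρ (z' * z⁻¹) (F (single z 1))) := by
        rw [← Module.End.mul_apply, ← map_mul, inv_mul_cancel_left]
    _ = ρ z'⁻¹ (F (single z' 1)) := by
        have hF' := (mem_coind_iff H).1 hF ⟨_, hk⟩ z
        rw [inv_mul_cancel_right] at hF'
        exact congr_arg _ hF'.symm

end Coind

section CoindEquiv
variable (H : Subgroup G) [H.Normal] (ρ : Representation L G V)

noncomputable def coindEquivFun : coind H (ρ.comp H.subtype) ≃ₗ[L] (G ⧸ H → V) where
  toFun F q := ρ q.out⁻¹ (F.1 (single q.out 1))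
  map_add' F F' := by ext; simp
  map_smul' c F := by ext; simp
  invFun t := ⟨(MonoidAlgebra.basis G L).constr L fun g => ρ g (t g),
    (mem_coind_iff H).2 fun h g => by
      simp only [basis_constr_single, QuotientGroup.mk_mul, map_mul, Module.End.mul_apply,
        (QuotientGroup.eq_one_iff _).2 h.2, one_mul]
      rfl⟩
  left_inv F := Subtype.ext <| (MonoidAlgebra.basis G L).ext fun g => by
    dsimp only
    rw [basis_apply, basis_constr_single,
      ← coind_inv_apply_single_eq F.2 (QuotientGroup.out_eq' (g : G ⧸ H)).symm,
      ← Module.End.mul_apply, ← map_mul, mul_inv_cancel, map_one, Module.End.one_apply]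
  right_inv t := funext fun q => by
    simp [basis_constr_single]

theorem coindEquivFun_apply (F : coind H (ρ.comp H.subtype)) (z : G) :
    coindEquivFun H ρ F z = ρ z⁻¹ (F.1 (single z 1)) :=
  coind_inv_apply_single_eq F.2 (QuotientGroup.out_eq' (z : G ⧸ H))

theorem coindEquivFun_coindRep (g : G) (F : coind H (ρ.comp H.subtype)) (q : G ⧸ H) :
    coindEquivFun H ρ (coindRep H _ g F) q = ρ g (coindEquivFun H ρ F (q * g)) := by
  rw [← QuotientGroup.out_eq' q, ← QuotientGroup.mk_mul, coindEquivFun_apply, coindEquivFun_apply]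
  simp [coindRep, coindAct, single_mul_single]

end CoindEquiv

section CoindTensor
variable (H : Subgroup G) [H.Normal] [Fintype (G ⧸ H)] (ρ : Representation L G V)

noncomputable def coindEquivTensor :
    coind H (ρ.comp H.subtype) ≃ₗ[L] V ⊗[L] MonoidAlgebra L (G ⧸ H) :=
  open scoped Classical in
  coindEquivFun H ρ ≪≫ₗ (TensorProduct.equivFunOfBasisRight
    ((MonoidAlgebra.basis (G ⧸ H) L).reindex (Equiv.inv _))).symm

theorem coindEquivTensor_eq_sum (F : coind H (ρ.comp H.subtype)) :
    coindEquivTensor H ρ F = ∑ q : G ⧸ H, coindEquivFun H ρ F q ⊗ₜ single q⁻¹ 1 := by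
  simp [coindEquivTensor, TensorProduct.equivFunOfBasisRight_symm_apply]

theorem coindEquivTensor_coindRep (g : G) (F : coind H (ρ.comp H.subtype)) :
    coindEquivTensor H ρ (coindRep H _ g F) =
      ρ.tprod (Representation.ofMulAction L G (G ⧸ H)) g (coindEquivTensor H ρ F) := by
  simp only [coindEquivTensor_eq_sum, coindEquivFun_coindRep, map_sum,
    Representation.tprod_apply, TensorProduct.map_tmul, Representation.ofMulAction_single]
  have smul_eq_mk_mul (x : G ⧸ H) : g • x = g * x := by
    induction x using QuotientGroup.induction_on
    rfl
  refine Fintype.sum_equiv (Equiv.mulRight (g : G ⧸ H)) _ _ fun q => ?_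
  simp [smul_eq_mk_mul]

end CoindTensor

/-- Let `G` be a group, `H` a normal subgroup of finite index, `L` a field
and `V` an `L`-linear representation of `G`. The map
`α : Hom_{L[H]}(L[G], V) → V ⊗_L L[G/H]`, `α(f) = Σ_{z̄ ∈ G/H} z⁻¹·f(z) ⊗ [z̄⁻¹]`
(`z` any representative of `z̄`), is well defined (each summand is independent of the choice
of representative) and is an `L`-linear `G`-equivariant isomorphism, where `G` acts on the
source by `(g·F)(x) = F(x·g)` and on the target by `g·(v ⊗ [x]) = (g·v) ⊗ [g·x]`. -/
theorem coind_iso_tensor_quotient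
    {L G V : Type*} [Field L] [Group G] [AddCommGroup V] [Module L V]
    (H : Subgroup G) [H.Normal] [Fintype (G ⧸ H)] (ρ : Representation L G V) :
    (∀ F ∈ coind H (ρ.comp H.subtype), ∀ (zbar : G ⧸ H) (z z' : G),
        (z : G ⧸ H) = zbar → (z' : G ⧸ H) = zbar →
        (ρ z⁻¹ (F (MonoidAlgebra.single z 1)) ⊗ₜ[L]
            (MonoidAlgebra.single zbar⁻¹ 1 : MonoidAlgebra L (G ⧸ H))
          = ρ z'⁻¹ (F (MonoidAlgebra.single z' 1)) ⊗ₜ[L]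
            (MonoidAlgebra.single zbar⁻¹ 1 : MonoidAlgebra L (G ⧸ H)))) ∧
    ∃ α : ↥(coind H (ρ.comp H.subtype)) ≃ₗ[L] V ⊗[L] MonoidAlgebra L (G ⧸ H),
      (∀ F : coind H (ρ.comp H.subtype),
          α F = ∑ zbar : G ⧸ H,
            ρ (Quotient.out zbar)⁻¹
                ((F : MonoidAlgebra L G →ₗ[L] V)
                  (MonoidAlgebra.single (Quotient.out zbar) 1)) ⊗ₜ[L]
              (MonoidAlgebra.single zbar⁻¹ 1 : MonoidAlgebra L (G ⧸ H))) ∧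
      (∀ (g : G) (F : coind H (ρ.comp H.subtype)),
          α (coindRep H (ρ.comp H.subtype) g F)
            = (ρ.tprod (Representation.ofMulAction L G (G ⧸ H))) g (α F)) := by
  refine ⟨fun F hF zbar z z' hz hz' => ?_, coindEquivTensor H ρ,
    coindEquivTensor_eq_sum H ρ, coindEquivTensor_coindRep H ρ⟩
  rw [coind_inv_apply_single_eq hF (hz.trans hz'.symm)]
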